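/- arXiv:1011.4178 — 3 statements merged into one kernel-verified Lean document; each statement's English description precedes it below -/
import Mathlib

section
/- Let n ≥ 2 be an integer, E a compact connected subset of the closed unit disk of ℂ, and D_1, …, D_n pairwise disjoint nonempty open connected subsets of ℂ whose union equals {z : |z| < 1} \ E. Fix k and suppose z ∈ (frontier D_k) \ E. If α is a connected subset of the unit circle T that is open in the subspace topology of T, contains z, and is disjoint from E, then every point of α is a boundary point of D_k, i.e. α ⊆ frontier D_k. -/
open Complex Metric Set

/-- If `z` is a boundary point of `D k` not in `E`, and `α` is a connected subset of the
unit circle `T`, open in the subspace topology of `T`, containing `z` and disjoint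
from `E`, then every point of `α` is a boundary point of `D k`. -/
theorem arc_subset_frontier (n : ℕ) (hn : 2 ≤ n) (E : Set ℂ)
    (hEcompact : IsCompact E) (hEconn : IsConnected E)
    (hEsub : E ⊆ closedBall (0 : ℂ) 1)
    (D : Fin n → Set ℂ)
    (hDdisj : ∀ i j : Fin n, i ≠ j → Disjoint (D i) (D j))
    (hDne : ∀ k, (D k).Nonempty)
    (hDopen : ∀ k, IsOpen (D k))
    (hDconn : ∀ k, IsConnected (D k))
    (hDunion : (⋃ k, D k) = ball (0 : ℂ) 1 \ E)
    (k : Fin n) (z : ℂ) (hz : z ∈ frontier (D k) \ E)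
    (α : Set ℂ) (hαT : α ⊆ sphere (0 : ℂ) 1)
    (hαopen : ∃ U : Set ℂ, IsOpen U ∧ α = U ∩ sphere (0 : ℂ) 1)
    (hαconn : IsPreconnected α)
    (hzα : z ∈ α) (hαE : Disjoint α E) :
    α ⊆ frontier (D k) := by
  classical
  obtain ⟨U, hUopen, hαU⟩ := hαopen
  have hEclosed : IsClosed E := hEcompact.isClosed
  have hDball : ∀ i, D i ⊆ ball (0 : ℂ) 1 := by
    intro i
    calc D i ⊆ ⋃ j, D j := subset_iUnion D i
      _ = ball (0 : ℂ) 1 \ E := hDunion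
      _ ⊆ ball (0 : ℂ) 1 := diff_subset
  -- Key local lemma
  have key : ∀ w ∈ α, ∃ (i : Fin n) (r : ℝ), 0 < r ∧
      (ball w r ∩ sphere (0 : ℂ) 1 ⊆ α) ∧
      (ball w r ∩ sphere (0 : ℂ) 1 ⊆ frontier (D i)) ∧
      (∀ j, j ≠ i → Disjoint (ball w r) (D j)) := by
    intro w hw
    have hwU : w ∈ U := by rw [hαU] at hw; exact hw.1
    have hwE : w ∉ E := fun h => hαE.ne_of_mem hw h rfl
    obtain ⟨r1, hr1, hball1⟩ := Metric.isOpen_iff.mp hUopen w hwU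
    obtain ⟨r2, hr2, hball2⟩ := Metric.isOpen_iff.mp hEclosed.isOpen_compl w hwE
    set r := min r1 r2 with hrdef
    have hrpos : 0 < r := lt_min hr1 hr2
    have hrU : ball w r ⊆ U := (ball_subset_ball (min_le_left _ _)).trans hball1
    have hrE : ∀ x ∈ ball w r, x ∉ E := fun x hx =>
      hball2 ((ball_subset_ball (min_le_right _ _)) hx)
    set S := ball w r ∩ ball (0 : ℂ) 1 with hSdef
    have hSconn : IsPreconnected S :=
      ((convex_ball w r).inter (convex_ball (0 : ℂ) 1)).isPreconnected
    have hwnorm : ‖w‖ = 1 := by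
      have := hαT hw; simpa [mem_sphere_iff_norm] using this
    -- a point of S
    set t := min r 1 / 2 with htdef
    have htpos : 0 < t := by positivity
    have htr : t < r := by
      have : t ≤ r / 2 := by
        apply div_le_div_of_nonneg_right (min_le_left _ _) (by norm_num)
      linarith
    have ht1 : t ≤ 1 / 2 := by
      apply div_le_div_of_nonneg_right (min_le_right _ _) (by norm_num)
    set p := (1 - t) • w with hpdef
    have hpS : p ∈ S := by
      constructor
      · have : dist p w = t := by
          rw [dist_eq_norm]
          have : p - w = (-t) • w := by
            rw [hpdef, sub_smul, one_smul, neg_smul]; ring_nf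
          rw [this, norm_smul, hwnorm]
          simp [abs_of_pos htpos]
        rw [mem_ball, this]; exact htr
      · rw [mem_ball, dist_zero_right, norm_smul, hwnorm]
        rw [Real.norm_eq_abs, abs_of_pos (by linarith : (0:ℝ) < 1 - t)]
        linarith
    have hSsub : S ⊆ ⋃ j, D j := by
      rw [hDunion]
      intro x hx
      exact ⟨hx.2, hrE x hx.1⟩
    obtain ⟨_, ⟨i, rfl⟩, hpD⟩ := hSsub hpS
    -- S ⊆ D i
    have hSD : S ⊆ D i := by
      apply hSconn.subset_left_of_subset_union (hDopen i)
        (isOpen_biUnion fun j (_ : j ≠ i) => hDopen j)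
      · rw [disjoint_iff_inter_eq_empty]
        ext x; simp only [mem_inter_iff, mem_iUnion, mem_empty_iff_false, iff_false]
        rintro ⟨hxi, j, hji, hxj⟩
        exact (hDdisj i j (Ne.symm hji)).ne_of_mem hxi hxj rfl
      · intro x hx
        obtain ⟨_, ⟨j, rfl⟩, hxj⟩ := hSsub hx
        by_cases hji : j = i
        · exact Or.inl (hji ▸ hxj)
        · exact Or.inr (mem_biUnion hji hxj)
      · exact ⟨p, hpS, hpD⟩
    refine ⟨i, r, hrpos, ?_, ?_, ?_⟩
    · intro x hx
      rw [hαU]; exact ⟨hrU hx.1, hx.2⟩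
    · intro x ⟨hxb, hxs⟩
      have hxnorm : ‖x‖ = 1 := by simpa [mem_sphere_iff_norm] using hxs
      rw [(hDopen i).frontier_eq]
      constructor
      · rw [Metric.mem_closure_iff]
        intro ε hε
        have hxw : dist x w < r := mem_ball.mp hxb
        set δ := min (min ε (r - dist x w)) 1 / 2 with hδdef
        have hδpos : 0 < δ := by
          have : 0 < r - dist x w := by linarith
          positivity
        have hδε : δ < ε := by
          have h1 : δ ≤ ε / 2 :=
            div_le_div_of_nonneg_right ((min_le_left _ _).trans (min_le_left _ _)) (by norm_num)
          linarith
        have hδr : δ < r - dist x w := by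
          have h1 : δ ≤ (r - dist x w) / 2 :=
            div_le_div_of_nonneg_right ((min_le_left _ _).trans (min_le_right _ _)) (by norm_num)
          linarith
        have hδ1 : δ ≤ 1 / 2 :=
          div_le_div_of_nonneg_right (min_le_right _ _) (by norm_num)
        refine ⟨(1 - δ) • x, ?_, ?_⟩
        · apply hSD
          constructor
          · rw [mem_ball]
            have hd : dist ((1 - δ) • x) x = δ := by
              rw [dist_eq_norm]
              have : (1 - δ) • x - x = (-δ) • x := by
                rw [sub_smul, one_smul, neg_smul]; ring_nf
              rw [this, norm_smul, hxnorm]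
              simp [abs_of_pos hδpos]
            calc dist ((1 - δ) • x) w ≤ dist ((1 - δ) • x) x + dist x w := dist_triangle _ _ _
              _ = δ + dist x w := by rw [hd]
              _ < r := by linarith
          · rw [mem_ball, dist_zero_right, norm_smul, hxnorm]
            rw [Real.norm_eq_abs, abs_of_pos (by linarith : (0:ℝ) < 1 - δ)]
            linarith
        · rw [dist_comm, dist_eq_norm]
          have : (1 - δ) • x - x = (-δ) • x := by
            rw [sub_smul, one_smul, neg_smul]; ring_nf
          rw [this, norm_smul, hxnorm]
          rw [Real.norm_eq_abs, abs_neg, abs_of_pos hδpos, mul_one]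
          exact hδε
      · intro hxD
        have := hDball i hxD
        rw [mem_ball, dist_zero_right, hxnorm] at this
        exact lt_irrefl 1 this
    · intro j hji
      rw [disjoint_left]
      intro x hxb hxD
      have hxS : x ∈ S := ⟨hxb, hDball j hxD⟩
      exact (hDdisj i j (Ne.symm hji)).ne_of_mem (hSD hxS) hxD rfl
  -- choose data
  haveI : Nonempty (Fin n) := ⟨⟨0, by omega⟩⟩
  choose! I R hRpos hsubα hfront hdisj using key
  -- each point of α is on the frontier of exactly D (I w)
  have hself : ∀ w ∈ α, w ∈ frontier (D (I w)) := by
    intro w hw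
    exact hfront w hw ⟨mem_ball_self (hRpos w hw), hαT hw⟩
  have huniq : ∀ w ∈ α, ∀ i, w ∈ frontier (D i) → i = I w := by
    intro w hw i hi
    by_contra hne
    have hd := hdisj w hw i hne
    have hwc : w ∈ closure (D i) := frontier_subset_closure hi
    rw [_root_.mem_closure_iff] at hwc
    obtain ⟨y, hy1, hy2⟩ := hwc (ball w (R w)) isOpen_ball (mem_ball_self (hRpos w hw))
    exact hd.ne_of_mem hy1 hy2 rfl
  -- conclude by connectedness
  intro w hw
  by_contra hwk
  have hIz : I z = k := (huniq z hzα k hz.1).symm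
  have hIw : I w ≠ k := fun h => hwk (h ▸ hself w hw)
  set u := ⋃ (x : ℂ) (_ : x ∈ α ∧ I x = k), ball x (R x) with hudef
  set v := ⋃ (x : ℂ) (_ : x ∈ α ∧ I x ≠ k), ball x (R x) with hvdef
  have huo : IsOpen u := isOpen_biUnion fun _ _ => isOpen_ball
  have hvo : IsOpen v := isOpen_biUnion fun _ _ => isOpen_ball
  have hcov : α ⊆ u ∪ v := by
    intro x hx
    by_cases h : I x = k
    · exact Or.inl (mem_biUnion ⟨hx, h⟩ (mem_ball_self (hRpos x hx)))
    · exact Or.inr (mem_biUnion ⟨hx, h⟩ (mem_ball_self (hRpos x hx)))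
  have hzu : (α ∩ u).Nonempty :=
    ⟨z, hzα, mem_biUnion ⟨hzα, hIz⟩ (mem_ball_self (hRpos z hzα))⟩
  have hwv : (α ∩ v).Nonempty :=
    ⟨w, hw, mem_biUnion ⟨hw, hIw⟩ (mem_ball_self (hRpos w hw))⟩
  obtain ⟨x, hxα, hxu, hxv⟩ := hαconn u v huo hvo hcov hzu hwv
  obtain ⟨_, ⟨a, rfl⟩, _, ⟨⟨haα, haI⟩, rfl⟩, hxa⟩ := hxu
  obtain ⟨_, ⟨b, rfl⟩, _, ⟨⟨hbα, hbI⟩, rfl⟩, hxb⟩ := hxv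
  have hxs : x ∈ sphere (0 : ℂ) 1 := hαT hxα
  have h1 : x ∈ frontier (D (I a)) := hfront a haα ⟨hxa, hxs⟩
  have h2 : x ∈ frontier (D (I b)) := hfront b hbα ⟨hxb, hxs⟩
  have e1 := huniq x hxα (I a) h1
  have e2 := huniq x hxα (I b) h2
  exact hbI ((e2.trans e1.symm).trans haI)
end

section
/- The Joukowski map J(ζ) = (ζ + ζ⁻¹)/2 is injective on the punctured open unit disk {ζ ∈ ℂ : 0 < |ζ| < 1}, and its image is exactly the complement in ℂ of the real segment {x ∈ ℂ : x.im = 0 and −1 ≤ x.re ≤ 1}. -/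
/-!
The equation `J ζ = x` is the quadratic `ζ ^ 2 - 2 x ζ + 1 = 0`, which always has a root and whose
two roots have product `1`; so every `x` has a preimage, and the preimages are exactly `ζ, ζ⁻¹`.
Hence `J` is injective on the punctured disk, and `x` is hit from the disk unless both roots lie on
the unit circle. On the circle `ζ⁻¹ = conj ζ`, so `J ζ = re ζ ∈ [-1, 1]`; conversely for
`x ∈ [-1, 1]` the roots are `x ± i √(1 - x ^ 2)`, of modulus `1`.
-/

open Complex Set

noncomputable def joukowski (ζ : ℂ) : ℂ := (ζ + ζ⁻¹) / 2

def realUnitSegment : Set ℂ := {x | x.im = 0 ∧ -1 ≤ x.re ∧ x.re ≤ 1}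

lemma joukowski_inv (ζ : ℂ) : joukowski ζ⁻¹ = joukowski ζ := by
  rw [joukowski, joukowski, inv_inv, add_comm]

lemma joukowski_eq_joukowski_iff {ζ η : ℂ} (hζ : ζ ≠ 0) (hη : η ≠ 0) :
    joukowski η = joukowski ζ ↔ η = ζ ∨ η = ζ⁻¹ := by
  refine ⟨fun h => ?_, by rintro (rfl | rfl) <;> simp [joukowski_inv]⟩
  have hfactor : (η - ζ) * (η * ζ - 1) = 0 := by
    simp only [joukowski] at h
    field_simp at h
    linear_combination h
  rcases mul_eq_zero.1 hfactor with h | h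
  · exact Or.inl (sub_eq_zero.1 h)
  · exact Or.inr (eq_inv_of_mul_eq_one_left (sub_eq_zero.1 h))

lemma joukowski_eq_iff {x w ζ : ℂ} (hw : w ^ 2 = x ^ 2 - 1) (hζ : ζ ≠ 0) :
    joukowski ζ = x ↔ ζ = x + w ∨ ζ = x - w := by
  have hquad : joukowski ζ = x ↔ (ζ - (x + w)) * (ζ - (x - w)) = 0 := by
    rw [joukowski, div_eq_iff two_ne_zero, ← sub_eq_zero]
    constructor <;> intro h
    · field_simp at h
      linear_combination h - hw
    · field_simp
      linear_combination h + hw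
  simpa [sub_eq_zero] using hquad

lemma exists_joukowski_eq (x : ℂ) : ∃ ζ, ζ ≠ 0 ∧ joukowski ζ = x := by
  obtain ⟨w, hw⟩ : ∃ w : ℂ, w ^ 2 = x ^ 2 - 1 := IsAlgClosed.exists_pow_nat_eq _ two_pos
  have hne : x + w ≠ 0 := by
    intro h
    have : (x + w) * (x - w) = 1 := by linear_combination -hw
    simp [h] at this
  exact ⟨x + w, hne, (joukowski_eq_iff hw hne).2 (Or.inl rfl)⟩

lemma joukowski_mem_realUnitSegment_iff {ζ : ℂ} (hζ : ζ ≠ 0) :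
    joukowski ζ ∈ realUnitSegment ↔ ‖ζ‖ = 1 := by
  constructor
  · rintro ⟨him, hge, hle⟩
    set x := joukowski ζ
    set s := √(1 - x.re ^ 2)
    have hs : s ^ 2 = 1 - x.re ^ 2 := Real.sq_sqrt (by nlinarith)
    have hx : x = x.re := Complex.ext rfl (by simpa using him)
    have hsC : (s : ℂ) ^ 2 = 1 - x.re ^ 2 := by exact_mod_cast hs
    have hw : (s * I) ^ 2 = x ^ 2 - 1 := by
      rw [hx, mul_pow, I_sq]
      linear_combination -hsC
    have hunit : ∀ t : ℝ, t ^ 2 = s ^ 2 → ‖(x.re : ℂ) + t * I‖ = 1 := fun t ht => by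
      rw [norm_add_mul_I, ht, hs, add_sub_cancel, Real.sqrt_one]
    rcases (joukowski_eq_iff hw hζ).1 rfl with h | h
    · rw [h, hx]
      exact hunit s rfl
    · rw [h, hx, sub_eq_add_neg, ← neg_mul, ← ofReal_neg]
      exact hunit (-s) (neg_sq s)
  · intro h1
    have hre : joukowski ζ = ζ.re := by
      rw [joukowski, inv_eq_conj h1, add_conj]
      push_cast
      ring
    have hbound := abs_le.1 ((abs_re_le_norm ζ).trans_eq h1)
    rw [realUnitSegment, mem_ofPred_eq, hre, ofReal_im, ofReal_re]
    exact ⟨rfl, hbound⟩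

/-- The Joukowski map `J(ζ) = (ζ + ζ⁻¹)/2` is injective on the punctured open unit disk,
and its image is the complement of the real segment `[-1, 1]` in `ℂ`. -/
theorem joukowski_injOn_image :
    Set.InjOn (fun ζ : ℂ => (ζ + ζ⁻¹) / 2)
      {ζ : ℂ | 0 < ‖ζ‖ ∧ ‖ζ‖ < 1} ∧
    (fun ζ : ℂ => (ζ + ζ⁻¹) / 2) '' {ζ : ℂ | 0 < ‖ζ‖ ∧ ‖ζ‖ < 1} =
      {x : ℂ | x.im = 0 ∧ -1 ≤ x.re ∧ x.re ≤ 1}ᶜ := by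
  change InjOn joukowski _ ∧ joukowski '' _ = realUnitSegmentᶜ
  constructor
  · rintro ζ ⟨hζ0, hζ1⟩ η ⟨hη0, hη1⟩ h
    rcases (joukowski_eq_joukowski_iff (norm_pos_iff.1 hη0) (norm_pos_iff.1 hζ0)).1 h with h | h
    · exact h
    · rw [h, norm_inv, inv_lt_one₀ hη0] at hζ1
      exact absurd hζ1 hη1.not_gt
  · ext x
    constructor
    · rintro ⟨ζ, ⟨hζ0, hζ1⟩, rfl⟩ hseg
      exact hζ1.ne ((joukowski_mem_realUnitSegment_iff (norm_pos_iff.1 hζ0)).1 hseg)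
    · intro hx
      obtain ⟨ζ, hζ, rfl⟩ := exists_joukowski_eq x
      have hζ1 : ‖ζ‖ ≠ 1 := fun h => hx ((joukowski_mem_realUnitSegment_iff hζ).2 h)
      rcases hζ1.lt_or_gt with hlt | hgt
      · exact ⟨ζ, ⟨norm_pos_iff.2 hζ, hlt⟩, rfl⟩
      · refine ⟨ζ⁻¹, ⟨norm_pos_iff.2 (inv_ne_zero hζ), ?_⟩, joukowski_inv ζ⟩
        rw [norm_inv]
        exact inv_lt_one_of_one_lt₀ hgt
end

section
/- For every θ ∈ (0, π), the real integral ∫_{−1}^{0} 1/((1 − w) · √(w² − 2 w cos θ + 1)) dw equals (1/(4 sin(θ/2))) · log((1 + sin(θ/2))/(1 − sin(θ/2))). -/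
open Real Set intervalIntegral

/-!
With `s = sin (θ / 2)` we have `cos θ = 1 - 2 s²`, and the quadratic under the root becomes
`Q(w) = s² (1 + w)² + (1 - s²) (1 - w)²`. Hence `√Q > -s (1 + w)` for `w < 1`, and
`(log (√Q + s (1 + w)) - log (1 - w)) / (2 s)` is a primitive of the integrand there.
At `w = 0` it equals `log (1 + s) / (2 s)`; at `w = -1`, where `√Q = 2 √(1 - s²)`, it equals
`log (1 - s²) / (4 s)`.
-/

section

variable {s : ℝ}

lemma quadratic_eq_sq_add_sq (s w : ℝ) :
    w ^ 2 - 2 * w * (1 - 2 * s ^ 2) + 1 = s ^ 2 * (1 + w) ^ 2 + (1 - s ^ 2) * (1 - w) ^ 2 := by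
  ring

lemma quadratic_pos (hs : s ^ 2 < 1) {w : ℝ} (hw : w < 1) :
    0 < w ^ 2 - 2 * w * (1 - 2 * s ^ 2) + 1 := by
  have : 0 < (1 - s ^ 2) * (1 - w) ^ 2 := mul_pos (by linarith) (pow_pos (by linarith) 2)
  rw [quadratic_eq_sq_add_sq]
  positivity

lemma neg_mul_lt_sqrt_quadratic (hs : s ^ 2 < 1) {w : ℝ} (hw : w < 1) :
    -(s * (1 + w)) < √(w ^ 2 - 2 * w * (1 - 2 * s ^ 2) + 1) := by
  refine lt_sqrt_of_sq_lt ?_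
  have : 0 < (1 - s ^ 2) * (1 - w) ^ 2 := mul_pos (by linarith) (pow_pos (by linarith) 2)
  rw [quadratic_eq_sq_add_sq]
  linarith

lemma hasDerivAt_log_sqrt_quadratic_sub_log (hs0 : s ≠ 0) (hs : s ^ 2 < 1) {w : ℝ}
    (hw : w < 1) :
    HasDerivAt
      (fun w ↦
        (log (√(w ^ 2 - 2 * w * (1 - 2 * s ^ 2) + 1) + s * (1 + w)) - log (1 - w)) / (2 * s))
      (1 / ((1 - w) * √(w ^ 2 - 2 * w * (1 - 2 * s ^ 2) + 1))) w := by
  have hQ := quadratic_pos hs hw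
  have hroot := neg_mul_lt_sqrt_quadratic hs hw
  have hsqrt : HasDerivAt (fun w ↦ √(w ^ 2 - 2 * w * (1 - 2 * s ^ 2) + 1))
      ((2 * w - 2 * (1 - 2 * s ^ 2)) / (2 * √(w ^ 2 - 2 * w * (1 - 2 * s ^ 2) + 1))) w := by
    refine HasDerivAt.sqrt ?_ hQ.ne'
    simpa using (((hasDerivAt_id w).pow 2).sub
      ((hasDerivAt_id w).const_mul 2 |>.mul_const _)).add_const 1
  have hlin : HasDerivAt (fun w ↦ s * (1 + w)) s w := by
    simpa using ((hasDerivAt_id w).const_add 1).const_mul s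
  have hsub : HasDerivAt (fun w ↦ 1 - w) (-1) w := by
    simpa using (hasDerivAt_id w).const_sub 1
  have hsum : HasDerivAt (fun w ↦ √(w ^ 2 - 2 * w * (1 - 2 * s ^ 2) + 1) + s * (1 + w)) _ w :=
    hsqrt.add hlin
  refine (((hsum.log (by linarith)).sub (hsub.log (by linarith))).div_const _).congr_deriv ?_
  have hq := (sqrt_pos.mpr hQ).ne'
  have hq2 := sq_sqrt hQ.le
  generalize √(w ^ 2 - 2 * w * (1 - 2 * s ^ 2) + 1) = q at hq hq2 hroot ⊢
  have : q + s * (1 + w) ≠ 0 := by linarith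
  have : 1 - w ≠ 0 := by linarith
  field_simp
  linear_combination hq2

theorem integral_one_div_mul_sqrt_quadratic (hs0 : s ≠ 0) (hs : s ^ 2 < 1) :
    ∫ w in (-1 : ℝ)..0, 1 / ((1 - w) * √(w ^ 2 - 2 * w * (1 - 2 * s ^ 2) + 1)) =
      1 / (4 * s) * log ((1 + s) / (1 - s)) := by
  have hlt : ∀ w ∈ uIcc (-1 : ℝ) 0, w < 1 := fun w hw ↦ by
    rw [uIcc_of_le (by norm_num)] at hw
    linarith [hw.2]
  have hint : IntervalIntegrable
      (fun w ↦ 1 / ((1 - w) * √(w ^ 2 - 2 * w * (1 - 2 * s ^ 2) + 1)))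
      MeasureTheory.volume (-1) 0 := by
    refine ContinuousOn.intervalIntegrable (continuousOn_const.div (by fun_prop) fun w hw ↦ ?_)
    exact mul_ne_zero (by linarith [hlt w hw]) (sqrt_pos.mpr (quadratic_pos hs (hlt w hw))).ne'
  rw [integral_eq_sub_of_hasDerivAt
    (fun w hw ↦ hasDerivAt_log_sqrt_quadratic_sub_log hs0 hs (hlt w hw)) hint]
  have h1s : 0 < 1 - s := by nlinarith
  have h1s' : 0 < 1 + s := by nlinarith
  have hsqrt : √((-1) ^ 2 - 2 * (-1) * (1 - 2 * s ^ 2) + 1 : ℝ) = 2 * √(1 - s ^ 2) := by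
    rw [show ((-1) ^ 2 - 2 * (-1) * (1 - 2 * s ^ 2) + 1 : ℝ) = 2 ^ 2 * (1 - s ^ 2) by ring,
      sqrt_mul (by norm_num), sqrt_sq (by norm_num)]
  simp only [hsqrt]
  rw [log_div h1s'.ne' h1s.ne']
  have hlog : log (2 * √(1 - s ^ 2)) = log 2 + (log (1 + s) + log (1 - s)) / 2 := by
    rw [log_mul two_ne_zero (sqrt_pos.mpr (by nlinarith)).ne', log_sqrt (by nlinarith),
      show 1 - s ^ 2 = (1 + s) * (1 - s) by ring, log_mul h1s'.ne' h1s.ne']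
  norm_num [hlog, add_comm 1 s]
  field_simp
  ring

end

/-- Evaluation of the integral `∫_{-1}^{0} dw / ((1-w) √(w² - 2w cos θ + 1))`. -/
theorem integral_eval (θ : ℝ) (hθ : θ ∈ Set.Ioo 0 π) :
    ∫ w in (-1 : ℝ)..0, 1 / ((1 - w) * Real.sqrt (w ^ 2 - 2 * w * Real.cos θ + 1)) =
      (1 / (4 * Real.sin (θ / 2))) *
        Real.log ((1 + Real.sin (θ / 2)) / (1 - Real.sin (θ / 2))) := by
  obtain ⟨hθ0, hθπ⟩ := hθ
  have hsin : 0 < sin (θ / 2) := sin_pos_of_pos_of_lt_pi (by linarith) (by linarith)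
  have hcos : 0 < cos (θ / 2) := cos_pos_of_mem_Ioo ⟨by linarith, by linarith⟩
  have hsin_sq : sin (θ / 2) ^ 2 < 1 := by nlinarith [sin_sq_add_cos_sq (θ / 2)]
  have hcos_eq : cos θ = 1 - 2 * sin (θ / 2) ^ 2 := by
    rw [← cos_two_mul_eq_one_sub, mul_div_cancel₀ θ two_ne_zero]
  rw [hcos_eq]
  exact integral_one_div_mul_sqrt_quadratic hsin.ne' hsin_sq
end
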